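/- If C^T is positive definite on F_1^T and the controls f_1^T,...,f_N^T ∈ F_1^T drive the system to the standard basis states u^{f_k^T}(T) = e_k ∈ ℝ^N, then f_1^T solves the Krein equation (C^T f_1^T)(t) = r(T-t) for 0 < t < T. -/

import Mathlib

/-! Writing `u^f(T) = ∑ₖ (cₖ/ρₖ) φ(λₖ)` with `cₖ = ∫₀ᵀ Sₖ(T-τ) f(τ) dτ`, orthogonality of the
eigenvectors turns `u^f(T) = e₁` into `cₖ/ρₖ = φ₁(λₖ)/ρₖ`, i.e. `cₖ = 1`. Since the kernel of `C^T`
is separable, `(C^T f)(t) = ∑ₖ Sₖ(T-t) cₖ/ρₖ`, which is then `r(T-t)`. -/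

open MeasureTheory Matrix

/-- The wave kernel `S(t,λ)`: `sin(√λ t)/√λ` for `λ > 0`,
`sinh(√(-λ) t)/√(-λ)` for `λ < 0`, and `t` for `λ = 0`. -/
noncomputable def S (t lam : ℝ) : ℝ :=
  if 0 < lam then Real.sin (Real.sqrt lam * t) / Real.sqrt lam
  else if lam < 0 then Real.sinh (Real.sqrt (-lam) * t) / Real.sqrt (-lam)
  else t

lemma continuous_S (lam : ℝ) : Continuous fun t => S t lam := by
  unfold S
  split_ifs <;> fun_prop

lemma continuous_S_sub (T lam : ℝ) : Continuous fun t => S (T - t) lam :=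
  (continuous_S lam).comp (continuous_sub_left T)

lemma continuous_of_mem_span {X R M : Type*} [TopologicalSpace X] [Semiring R]
    [TopologicalSpace M] [AddCommMonoid M] [ContinuousAdd M] [Module R M] [ContinuousConstSMul R M]
    {s : Set (X → M)} (hs : ∀ g ∈ s, Continuous g) {f : X → M} (hf : f ∈ Submodule.span R s) :
    Continuous f := by
  induction hf using Submodule.span_induction with
  | mem g hg => exact hs g hg
  | zero => exact continuous_const
  | add g h _ _ hg hh => exact hg.add hh
  | smul c g _ hg => exact hg.const_smul c

lemma Matrix.mul_eq_one_of_vecMul_eq_single {n R : Type*} [Fintype n] [DecidableEq n]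
    [CommSemiring R] {φ : Matrix n n R} {ρ a : n → R} {i₀ : n}
    (horth : φ * φᵀ = diagonal ρ) (hcol : ∀ k, φ k i₀ = 1) (ha : a ᵥ* φ = Pi.single i₀ 1) :
    a * ρ = 1 := by
  ext k
  have h := congrFun (congrArg (· ᵥ* φᵀ) ha) k
  simp only [vecMul_vecMul, horth, vecMul_diagonal, single_one_vecMul] at h
  simpa [hcol] using h

lemma intervalIntegral.integral_sum_mul_eq_sum_mul_integral {ι : Type*} (s : Finset ι)
    (a : ι → ℝ) (b : ι → ℝ → ℝ) (f : ℝ → ℝ) {x y : ℝ}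
    (hb : ∀ k ∈ s, IntervalIntegrable (fun u => b k u * f u) volume x y) :
    ∫ u in x..y, (∑ k ∈ s, a k * b k u) * f u = ∑ k ∈ s, a k * ∫ u in x..y, b k u * f u := by
  simp_rw [Finset.sum_mul, mul_assoc]
  rw [intervalIntegral.integral_finsetSum fun k hk => (hb k hk).const_mul (a k)]
  simp_rw [intervalIntegral.integral_const_mul]

theorem krein_equation_for_first_control_general
    (N : ℕ) (hN : 0 < N) (T : ℝ)
    (lam : Fin N → ℝ)
    (phiv : Fin N → Fin N → ℝ)
    (hfirst : ∀ k : Fin N, phiv k ⟨0, hN⟩ = 1)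
    (rho : Fin N → ℝ) (hrhopos : ∀ k, 0 < rho k)
    (horth : ∀ j k : Fin N,
      ∑ i : Fin N, phiv j i * phiv k i = if j = k then rho k else 0)
    (W : (ℝ → ℝ) → (Fin N → ℝ))
    (hW : ∀ f : ℝ → ℝ,
      W f = fun i => ∑ k : Fin N,
        (1 / rho k) * (∫ τ in (0:ℝ)..T, S (T - τ) (lam k) * f τ) * phiv k i)
    (Cop : (ℝ → ℝ) → (ℝ → ℝ))
    (hC : ∀ (f : ℝ → ℝ) (t : ℝ),
      Cop f t = ∫ s in (0:ℝ)..T,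
        (∑ k : Fin N, (1 / rho k) * S (T - t) (lam k) * S (T - s) (lam k)) * f s)
    (r : ℝ → ℝ) (hr : ∀ t : ℝ, r t = ∑ k : Fin N, S t (lam k) / rho k)
    (f₁ : ℝ → ℝ)
    (hf₁mem : f₁ ∈ Submodule.span ℝ
      (Set.range fun k : Fin N => fun t : ℝ => S (T - t) (lam k)))
    (hf₁ : W f₁ = fun i : Fin N => if i = ⟨0, hN⟩ then 1 else 0) :
    ∀ t ∈ Set.Ioo (0:ℝ) T, Cop f₁ t = r (T - t) := by
  intro t _
  have hcont : Continuous f₁ := continuous_of_mem_span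
    (by rintro _ ⟨k, rfl⟩; exact continuous_S_sub T (lam k)) hf₁mem
  have hgram : of phiv * (of phiv)ᵀ = diagonal rho := by
    ext j k
    simp only [mul_apply, transpose_apply, of_apply, horth, diagonal_apply]
    split_ifs with hjk <;> simp [hjk]
  have hstate : (fun k => 1 / rho k * ∫ τ in (0:ℝ)..T, S (T - τ) (lam k) * f₁ τ) ᵥ* of phiv =
      Pi.single ⟨0, hN⟩ 1 := by
    ext i
    simpa [vecMul, dotProduct, Pi.single_apply, hW] using congrFun hf₁ i
  have hc : ∀ k, ∫ τ in (0:ℝ)..T, S (T - τ) (lam k) * f₁ τ = 1 := fun k => by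
    have := congrFun (mul_eq_one_of_vecMul_eq_single hgram hfirst hstate) k
    rwa [Pi.mul_apply, one_div_mul_eq_div, div_mul_cancel₀ _ (hrhopos k).ne'] at this
  rw [hC, hr, intervalIntegral.integral_sum_mul_eq_sum_mul_integral _
    (fun k => 1 / rho k * S (T - t) (lam k)) (fun k s => S (T - s) (lam k)) f₁ fun k _ =>
    ((continuous_S_sub T (lam k)).mul hcont).intervalIntegrable 0 T]
  simp only [hc, mul_one, one_div_mul_eq_div]

/-- Krein equation: if `C^T` is positive definite on
`F₁^T = span{Sₖ(T-·)}` and the control `f₁ ∈ F₁^T` drives the system to the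
first standard basis state `u^{f₁}(T) = e₁`, then `f₁` solves the Krein
equation `(C^T f₁)(t) = r(T - t)` for `0 < t < T`, where
`r(t) = ∑ₖ Sₖ(t)/ρₖ` is the response function. -/
theorem krein_equation_for_first_control
    (N : ℕ) (hN : 0 < N) (T : ℝ) (hT : 0 < T)
    (lam : Fin N → ℝ)
    (phiv : Fin N → Fin N → ℝ)
    (hfirst : ∀ k : Fin N, phiv k ⟨0, hN⟩ = 1)
    (rho : Fin N → ℝ) (hrhopos : ∀ k, 0 < rho k)
    (horth : ∀ j k : Fin N,
      ∑ i : Fin N, phiv j i * phiv k i = if j = k then rho k else 0)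
    (W : (ℝ → ℝ) → (Fin N → ℝ))
    (hW : ∀ f : ℝ → ℝ,
      W f = fun i => ∑ k : Fin N,
        (1 / rho k) * (∫ τ in (0:ℝ)..T, S (T - τ) (lam k) * f τ) * phiv k i)
    (Cop : (ℝ → ℝ) → (ℝ → ℝ))
    (hC : ∀ (f : ℝ → ℝ) (t : ℝ),
      Cop f t = ∫ s in (0:ℝ)..T,
        (∑ k : Fin N, (1 / rho k) * S (T - t) (lam k) * S (T - s) (lam k)) * f s)
    (r : ℝ → ℝ) (hr : ∀ t : ℝ, r t = ∑ k : Fin N, S t (lam k) / rho k)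
    (hposdef : ∀ f : ℝ → ℝ, Continuous f →
      f ∈ Submodule.span ℝ
        (Set.range fun k : Fin N => fun t : ℝ => S (T - t) (lam k)) →
      f ≠ 0 → 0 < ∫ t in (0:ℝ)..T, Cop f t * f t)
    (f₁ : ℝ → ℝ)
    (hf₁mem : f₁ ∈ Submodule.span ℝ
      (Set.range fun k : Fin N => fun t : ℝ => S (T - t) (lam k)))
    (hf₁ : W f₁ = fun i : Fin N => if i = ⟨0, hN⟩ then 1 else 0) :
    ∀ t ∈ Set.Ioo (0:ℝ) T, Cop f₁ t = r (T - t) :=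
  krein_equation_for_first_control_general N hN T lam phiv hfirst rho hrhopos horth W hW Cop hC r hr
    f₁ hf₁mem hf₁
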